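/- Let ε and ε' be sign vectors that differ at exactly one index k, and let 1 ≤ i, j ≤ n with i ≠ j. If F^ε_{i,k} = F^{ε'}_{j,k} and this common face is nonempty, then either (j = i−1 and k = i) or (j = i+1 and k = i+1). -/

import Mathlib

noncomputable section

open Set

/-- The brick `Y^ε_i ⊆ S^n` (coordinate indices are 0-based, so the 1-based
condition `k ≤ i` becomes `(k : ℕ) < i`, and `k ≥ i+1` becomes `i ≤ (k : ℕ)`). -/
def Ybrick (n : ℕ) (ε : Fin (n + 1) → ℝ) (i : ℕ) : Set (EuclideanSpace ℝ (Fin (n + 1))) :=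
  {v | ‖v‖ = 1 ∧ (∀ k, 0 ≤ ε k * v k) ∧
    (∃ k : Fin (n + 1), (k : ℕ) < i ∧ v k ≠ 0) ∧
    (∃ k : Fin (n + 1), i ≤ (k : ℕ) ∧ v k ≠ 0)}

/-- The `j`-th face `F^ε_{i,j}` of `Y^ε_i`. -/
def Fface (n : ℕ) (ε : Fin (n + 1) → ℝ) (i : ℕ) (j : Fin (n + 1)) :
    Set (EuclideanSpace ℝ (Fin (n + 1))) :=
  {v ∈ Ybrick n ε i | v j = 0}

/-!
Say `i < j`. A point of the nonempty face `F^ε_{i,k}` has a nonzero coordinate `a < i`, necessarily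
`a ≠ k`. Unless `j = i + 1` and `k = i`, there is also a coordinate `b` with `i ≤ b < j` and `b ≠ k`.
A unit vector in the closed `ε`-orthant supported exactly on `{a, b}` then lies in `F^ε_{i,k}`, but
has no nonzero coordinate `≥ j`, so it is not in `Y^{ε'}_j ⊇ F^{ε'}_{j,k}`. The case `j < i` is
symmetric.
-/

section

variable {n : ℕ}

def orthantIndicator (ε : Fin (n + 1) → ℝ) (s : Finset (Fin (n + 1))) :
    EuclideanSpace ℝ (Fin (n + 1)) :=
  WithLp.toLp 2 fun l => if l ∈ s then (if 0 ≤ ε l then 1 else -1) else 0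

theorem orthantIndicator_ne_zero_iff {ε : Fin (n + 1) → ℝ} {s : Finset (Fin (n + 1))}
    {l : Fin (n + 1)} : orthantIndicator ε s l ≠ 0 ↔ l ∈ s := by
  simp only [orthantIndicator, PiLp.toLp_apply]
  split_ifs <;> simp_all

theorem mul_orthantIndicator_nonneg (ε : Fin (n + 1) → ℝ) (s : Finset (Fin (n + 1)))
    (l : Fin (n + 1)) : 0 ≤ ε l * orthantIndicator ε s l := by
  simp only [orthantIndicator, PiLp.toLp_apply]
  split_ifs <;> linarith

theorem inv_norm_smul_mem_Ybrick {ε : Fin (n + 1) → ℝ} {i : ℕ}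
    {u : EuclideanSpace ℝ (Fin (n + 1))} (hsign : ∀ l, 0 ≤ ε l * u l)
    (hlow : ∃ l : Fin (n + 1), (l : ℕ) < i ∧ u l ≠ 0)
    (hhigh : ∃ l : Fin (n + 1), i ≤ (l : ℕ) ∧ u l ≠ 0) :
    ‖u‖⁻¹ • u ∈ Ybrick n ε i := by
  obtain ⟨a, hai, hua⟩ := hlow
  obtain ⟨b, hib, hub⟩ := hhigh
  have hu0 : u ≠ 0 := fun h => hua (by simp [h])
  have hu : 0 < ‖u‖ := norm_pos_iff.mpr hu0
  refine ⟨by simp [norm_smul, hu.ne'], fun l => ?_, ⟨a, hai, ?_⟩, ⟨b, hib, ?_⟩⟩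
  · simpa only [PiLp.smul_apply, smul_eq_mul, mul_left_comm] using
      mul_nonneg (inv_nonneg.mpr hu.le) (hsign l)
  · simpa using ⟨hu0, hua⟩
  · simpa using ⟨hu0, hub⟩

theorem eq_add_one_and_val_eq_of_Fface_eq {ε ε' : Fin (n + 1) → ℝ} {k : Fin (n + 1)} {i j : ℕ}
    (hij : i < j)
    (heq : Fface n ε i k = Fface n ε' j k) (hne : (Fface n ε i k).Nonempty) :
    j = i + 1 ∧ (k : ℕ) = i := by
  obtain ⟨v, hv⟩ := hne
  have hjn : j ≤ n := by
    obtain ⟨⟨_, _, _, ⟨l, hjl, _⟩⟩, _⟩ : v ∈ Fface n ε' j k := heq ▸ hv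
    omega
  obtain ⟨⟨_, _, ⟨a, hai, hva⟩, _⟩, hvk⟩ := hv
  have hak : a ≠ k := fun h => hva (h ▸ hvk)
  by_contra hadj
  obtain ⟨b, hib, hbj, hbk⟩ : ∃ b : Fin (n + 1), i ≤ (b : ℕ) ∧ (b : ℕ) < j ∧ b ≠ k := by
    by_cases hk : (k : ℕ) = i
    · exact ⟨⟨i + 1, by omega⟩, by simp, by simp; omega, fun h => by simp [← h] at hk⟩
    · exact ⟨⟨i, by omega⟩, le_rfl, hij, fun h => hk (by simp [← h])⟩
  set u := orthantIndicator ε {a, b}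
  have hsupp : ∀ l, u l ≠ 0 → (l : ℕ) < j := by
    intro l hl
    rcases Finset.mem_insert.mp (orthantIndicator_ne_zero_iff.mp hl) with rfl | hl
    · omega
    · rw [Finset.mem_singleton.mp hl]; exact hbj
  have hw : ‖u‖⁻¹ • u ∈ Fface n ε i k := by
    refine ⟨inv_norm_smul_mem_Ybrick (mul_orthantIndicator_nonneg ε _)
      ⟨a, hai, orthantIndicator_ne_zero_iff.mpr (by simp)⟩
      ⟨b, hib, orthantIndicator_ne_zero_iff.mpr (by simp)⟩, ?_⟩
    simp [u, orthantIndicator, hak.symm, hbk.symm]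
  obtain ⟨⟨_, _, _, ⟨l, hjl, hwl⟩⟩, _⟩ : ‖u‖⁻¹ • u ∈ Fface n ε' j k := heq ▸ hw
  simp only [PiLp.smul_apply, smul_eq_mul] at hwl
  have := hsupp l (right_ne_zero_of_mul hwl)
  omega

end

theorem face_match_cases (n : ℕ)
    (ε ε' : Fin (n + 1) → ℝ) (k : Fin (n + 1))
    (i j : ℕ) (hij : i ≠ j)
    (heq : Fface n ε i k = Fface n ε' j k) (hne : (Fface n ε i k).Nonempty) :
    (j = i - 1 ∧ (k : ℕ) + 1 = i) ∨ (j = i + 1 ∧ (k : ℕ) + 1 = i + 1) := by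
  rcases hij.lt_or_gt with hlt | hgt
  · obtain ⟨rfl, hk⟩ := eq_add_one_and_val_eq_of_Fface_eq hlt heq hne
    omega
  · obtain ⟨rfl, hk⟩ := eq_add_one_and_val_eq_of_Fface_eq hgt heq.symm (heq ▸ hne)
    omega
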